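/- arXiv:2002.07088 — 2 statements merged into one kernel-verified Lean document; each statement's English description precedes it below -/
import Mathlib

section
/- Let (Ω, P) be a probability space and let X_1, …, X_n be independent identically distributed random variables on Ω, each taking the value 1 with probability p and the value 0 with probability 1 − p, where 0 < p ≤ 1. Let A = X_1 + ⋯ + X_n. Then for every ζ with 0 < ζ ≤ 1, the probability that |A/n − p| ≥ ζ·p is at most 2·exp(−n·p·ζ²/3). -/
open MeasureTheory ProbabilityTheory Real

/-! The moment generating function of a `{0,1}`-valued variable with success probability `q`
is `1 + q (eᵗ - 1) ≤ exp (q (eᵗ - 1))`, so by independence the sum `S` of the `X i` has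
`mgf S t ≤ exp (m (eᵗ - 1))` with `m = n p`, the mgf of a Poisson variable of mean `m`.
Markov's inequality applied to `exp (± t S)` with `t = 2ζ/3`, together with
`eᵗ ≤ 1 + t + 3t²/4` for `|t| ≤ 1`, bounds each of the tails `S ≥ (1 + ζ) m` and
`S ≤ (1 - ζ) m` by `exp (-m ζ² / 3)`. -/

lemma Real.exp_le_one_add_add_three_quarters_mul_sq {x : ℝ} (hx : |x| ≤ 1) :
    exp x ≤ 1 + x + 3 / 4 * x ^ 2 := by
  have h := (abs_le.mp (Real.exp_bound hx (n := 2) two_pos)).2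
  simp only [Finset.sum_range_succ, Finset.sum_range_zero, sq_abs] at h
  norm_num at h
  linarith

section ZeroOne

variable {Ω : Type*} [MeasurableSpace Ω] {μ : Measure Ω} {Y : Ω → ℝ}

lemma exp_mul_ae_eq_of_ae_zero_or_one (h01 : ∀ᵐ ω ∂μ, Y ω = 0 ∨ Y ω = 1) (t : ℝ) :
    (fun ω => exp (t * Y ω)) =ᵐ[μ]
      fun ω => 1 + {ω | Y ω = 1}.indicator (fun _ => exp t - 1) ω := by
  filter_upwards [h01] with ω hω
  rcases hω with hω | hω <;> simp [hω]

lemma integrable_exp_mul_of_ae_zero_or_one [IsFiniteMeasure μ] (hY : Measurable Y)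
    (h01 : ∀ᵐ ω ∂μ, Y ω = 0 ∨ Y ω = 1) (t : ℝ) :
    Integrable (fun ω => exp (t * Y ω)) μ :=
  ((integrable_const 1).add
      ((integrable_const _).indicator (hY (measurableSet_singleton 1)))).congr
    (exp_mul_ae_eq_of_ae_zero_or_one h01 t).symm

lemma mgf_of_ae_zero_or_one [IsProbabilityMeasure μ] (hY : Measurable Y)
    (h01 : ∀ᵐ ω ∂μ, Y ω = 0 ∨ Y ω = 1) (t : ℝ) :
    mgf Y μ t = 1 + μ.real {ω | Y ω = 1} * (exp t - 1) := by
  have hs : MeasurableSet {ω | Y ω = 1} := hY (measurableSet_singleton 1)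
  rw [mgf, integral_congr_ae (exp_mul_ae_eq_of_ae_zero_or_one h01 t),
    integral_add (integrable_const 1) ((integrable_const _).indicator hs),
    integral_indicator_const _ hs]
  simp

lemma mgf_le_exp_of_ae_zero_or_one [IsProbabilityMeasure μ] (hY : Measurable Y)
    (h01 : ∀ᵐ ω ∂μ, Y ω = 0 ∨ Y ω = 1) (t : ℝ) :
    mgf Y μ t ≤ exp (μ.real {ω | Y ω = 1} * (exp t - 1)) := by
  rw [mgf_of_ae_zero_or_one hY h01]
  linarith [add_one_le_exp (μ.real {ω | Y ω = 1} * (exp t - 1))]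

lemma ProbabilityTheory.iIndepFun.mgf_sum_le_exp_of_ae_zero_or_one {ι : Type*}
    {X : ι → Ω → ℝ} (hindep : iIndepFun X μ) (hX : ∀ i, Measurable (X i))
    (h01 : ∀ i, ∀ᵐ ω ∂μ, X i ω = 0 ∨ X i ω = 1) (s : Finset ι) (t : ℝ) :
    mgf (∑ i ∈ s, X i) μ t ≤
      exp ((∑ i ∈ s, μ.real {ω | X i ω = 1}) * (exp t - 1)) := by
  have := hindep.isProbabilityMeasure
  rw [hindep.mgf_sum hX, Finset.sum_mul, exp_sum]
  exact Finset.prod_le_prod (fun _ _ => mgf_nonneg)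
    (fun i _ => mgf_le_exp_of_ae_zero_or_one (hX i) (h01 i) t)

end ZeroOne

section PoissonTail

variable {Ω : Type*} [MeasurableSpace Ω] {μ : Measure Ω} [IsFiniteMeasure μ] {S : Ω → ℝ}
  {m ζ : ℝ}

lemma measureReal_ge_le_of_mgf_le_poisson (hm : 0 ≤ m) (hζ : 0 ≤ ζ) (hζ1 : ζ ≤ 1)
    (hint : ∀ t, Integrable (fun ω => exp (t * S ω)) μ)
    (hmgf : ∀ t, mgf S μ t ≤ exp (m * (exp t - 1))) :
    μ.real {ω | m * (1 + ζ) ≤ S ω} ≤ exp (-(m * ζ ^ 2) / 3) := by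
  set t := 2 * ζ / 3
  have hexp : exp t ≤ 1 + t + 3 / 4 * t ^ 2 :=
    exp_le_one_add_add_three_quarters_mul_sq (by simp only [t, abs_le]; constructor <;> linarith)
  calc μ.real {ω | m * (1 + ζ) ≤ S ω}
      ≤ exp (-t * (m * (1 + ζ))) * mgf S μ t :=
        measure_ge_le_exp_mul_mgf _ (by positivity) (hint t)
    _ ≤ exp (-t * (m * (1 + ζ))) * exp (m * (exp t - 1)) := by gcongr; exact hmgf t
    _ = exp (-t * (m * (1 + ζ)) + m * (exp t - 1)) := (exp_add _ _).symm
    _ ≤ exp (-(m * ζ ^ 2) / 3) := by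
      gcongr
      simp only [t] at hexp ⊢
      nlinarith [mul_le_mul_of_nonneg_left hexp hm]

lemma measureReal_le_le_of_mgf_le_poisson (hm : 0 ≤ m) (hζ : 0 ≤ ζ) (hζ1 : ζ ≤ 1)
    (hint : ∀ t, Integrable (fun ω => exp (t * S ω)) μ)
    (hmgf : ∀ t, mgf S μ t ≤ exp (m * (exp t - 1))) :
    μ.real {ω | S ω ≤ m * (1 - ζ)} ≤ exp (-(m * ζ ^ 2) / 3) := by
  set t := -(2 * ζ / 3)
  have hexp : exp t ≤ 1 + t + 3 / 4 * t ^ 2 :=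
    exp_le_one_add_add_three_quarters_mul_sq (by simp only [t, abs_le]; constructor <;> linarith)
  calc μ.real {ω | S ω ≤ m * (1 - ζ)}
      ≤ exp (-t * (m * (1 - ζ))) * mgf S μ t :=
        measure_le_le_exp_mul_mgf _ (by simp only [t]; linarith) (hint t)
    _ ≤ exp (-t * (m * (1 - ζ))) * exp (m * (exp t - 1)) := by gcongr; exact hmgf t
    _ = exp (-t * (m * (1 - ζ)) + m * (exp t - 1)) := (exp_add _ _).symm
    _ ≤ exp (-(m * ζ ^ 2) / 3) := by
      gcongr
      simp only [t] at hexp ⊢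
      nlinarith [mul_le_mul_of_nonneg_left hexp hm]

lemma measure_abs_sub_ge_le_of_mgf_le_poisson (hm : 0 ≤ m) (hζ : 0 ≤ ζ) (hζ1 : ζ ≤ 1)
    (hint : ∀ t, Integrable (fun ω => exp (t * S ω)) μ)
    (hmgf : ∀ t, mgf S μ t ≤ exp (m * (exp t - 1))) :
    μ {ω | ζ * m ≤ |S ω - m|} ≤ ENNReal.ofReal (2 * exp (-(m * ζ ^ 2) / 3)) := by
  have hsplit : {ω | ζ * m ≤ |S ω - m|} ⊆
      {ω | m * (1 + ζ) ≤ S ω} ∪ {ω | S ω ≤ m * (1 - ζ)} := by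
    intro ω hω
    rcases le_abs'.mp (show ζ * m ≤ |S ω - m| from hω) with h | h
    · exact Or.inr (show S ω ≤ m * (1 - ζ) by linarith)
    · exact Or.inl (show m * (1 + ζ) ≤ S ω by linarith)
  rw [← ENNReal.ofReal_toReal (measure_ne_top μ _)]
  refine ENNReal.ofReal_le_ofReal ?_
  calc μ.real {ω | ζ * m ≤ |S ω - m|}
      ≤ μ.real ({ω | m * (1 + ζ) ≤ S ω} ∪ {ω | S ω ≤ m * (1 - ζ)}) :=
        measureReal_mono hsplit
    _ ≤ μ.real {ω | m * (1 + ζ) ≤ S ω} + μ.real {ω | S ω ≤ m * (1 - ζ)} :=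
        measureReal_union_le _ _
    _ ≤ 2 * exp (-(m * ζ ^ 2) / 3) := by
      linarith [measureReal_ge_le_of_mgf_le_poisson hm hζ hζ1 hint hmgf,
        measureReal_le_le_of_mgf_le_poisson hm hζ hζ1 hint hmgf]

end PoissonTail

theorem chernoff_two_sided_multiplicative_general
    {Ω : Type*} [MeasurableSpace Ω] (μ : Measure Ω) [IsProbabilityMeasure μ]
    (n : ℕ) (hn : 0 < n) (X : Fin n → Ω → ℝ)
    (hmeas : ∀ i, Measurable (X i))
    (hindep : iIndepFun X μ)
    (p : ℝ) (hp : 0 < p)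
    (hval : ∀ i, ∀ᵐ ω ∂μ, X i ω = 0 ∨ X i ω = 1)
    (hone : ∀ i, μ {ω | X i ω = 1} = ENNReal.ofReal p)
    (ζ : ℝ) (hζ : 0 < ζ) (hζ1 : ζ ≤ 1) :
    μ {ω | ζ * p ≤ |(∑ i, X i ω) / (n : ℝ) - p|}
      ≤ ENNReal.ofReal (2 * Real.exp (-(n * p * ζ ^ 2) / 3)) := by
  have hn' : (0 : ℝ) < n := Nat.cast_pos.mpr hn
  have hmean : ∑ i, μ.real {ω | X i ω = 1} = n * p := by
    simp [measureReal_def, hone, ENNReal.toReal_ofReal hp.le]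
  have hrescale : {ω | ζ * p ≤ |(∑ i, X i ω) / (n : ℝ) - p|}
      = {ω | ζ * (n * p) ≤ |(∑ i, X i) ω - n * p|} := by
    ext ω
    rw [Set.mem_ofPred_eq, Set.mem_ofPred_eq, Finset.sum_apply, div_sub' hn'.ne', abs_div,
      abs_of_pos hn', le_div_iff₀ hn']
    ring_nf
  rw [hrescale]
  refine measure_abs_sub_ge_le_of_mgf_le_poisson (by positivity) hζ.le hζ1
    (fun t => hindep.integrable_exp_mul_sum hmeas
      fun i _ => integrable_exp_mul_of_ae_zero_or_one (hmeas i) (hval i) t)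
    fun t => ?_
  simpa [hmean] using hindep.mgf_sum_le_exp_of_ae_zero_or_one hmeas hval Finset.univ t

/-- **Two-sided multiplicative Chernoff bound** for sums of i.i.d. Bernoulli
random variables: if `X 1, …, X n` are independent random variables, each taking
the value `1` with probability `p` and the value `0` with probability `1 - p`
(`0 < p ≤ 1`), and `A = ∑ i, X i`, then for every `0 < ζ ≤ 1`,
`P(|A/n - p| ≥ ζ·p) ≤ 2·exp(-n·p·ζ²/3)`. -/
theorem chernoff_two_sided_multiplicative
    {Ω : Type*} [MeasurableSpace Ω] (μ : Measure Ω) [IsProbabilityMeasure μ]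
    (n : ℕ) (hn : 0 < n) (X : Fin n → Ω → ℝ)
    (hmeas : ∀ i, Measurable (X i))
    (hindep : iIndepFun X μ)
    (p : ℝ) (hp : 0 < p) (hp1 : p ≤ 1)
    (hval : ∀ i, ∀ᵐ ω ∂μ, X i ω = 0 ∨ X i ω = 1)
    (hone : ∀ i, μ {ω | X i ω = 1} = ENNReal.ofReal p)
    (hzero : ∀ i, μ {ω | X i ω = 0} = ENNReal.ofReal (1 - p))
    (ζ : ℝ) (hζ : 0 < ζ) (hζ1 : ζ ≤ 1) :
    μ {ω | ζ * p ≤ |(∑ i, X i ω) / (n : ℝ) - p|}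
      ≤ ENNReal.ofReal (2 * Real.exp (-(n * p * ζ ^ 2) / 3)) :=
  chernoff_two_sided_multiplicative_general μ n hn X hmeas hindep p hp hval hone ζ hζ hζ1
end

section
/- Let n ≥ 2, let U be a finite set (a Finset in some type), let S : Fin n → Finset U be a family of subsets of U, and let k be a natural number. For a subset M of (Fin n) × (Fin n), define I_M = { i ∈ Fin n : (i, 0) ∈ M }, and say M is accepted if |I_M| ≤ k and ⋃_{i ∈ I_M} S(i) = U. Then the following are equivalent: (1) there exists a finite set I ⊆ Fin n with |I| ≤ k and ⋃_{i ∈ I} S(i) = U (i.e., the set cover instance (U, S, k) has a solution); (2) there exists a nonempty subset M of (Fin n) × (Fin n) whose induced subgraph in the n×n grid graph is connected and which is accepted. -/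
/-- The `n × n` grid graph on vertex set `Fin n × Fin n`: two vertices are
adjacent iff they agree in one coordinate and differ by exactly 1 in the other. -/
def gridGraph (n : ℕ) : SimpleGraph (Fin n × Fin n) where
  Adj a b :=
    (a.1 = b.1 ∧ (a.2.val + 1 = b.2.val ∨ b.2.val + 1 = a.2.val)) ∨
    (a.2 = b.2 ∧ (a.1.val + 1 = b.1.val ∨ b.1.val + 1 = a.1.val))
  symm := by
    constructor
    intro a b h
    rcases h with ⟨h1, h2⟩ | ⟨h1, h2⟩
    · exact Or.inl ⟨h1.symm, h2.symm⟩
    · exact Or.inr ⟨h1.symm, h2.symm⟩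
  loopless := by
    constructor
    intro a h
    rcases h with ⟨_, h⟩ | ⟨_, h⟩ <;> omega

lemma grid_mask_connected (n : ℕ) (hn : 2 ≤ n) (I : Finset (Fin n)) :
    ((gridGraph n).induce
      {p : Fin n × Fin n | p.2 = (⟨1, by omega⟩ : Fin n) ∨
        (p.2 = (⟨0, Nat.lt_of_lt_of_le (by decide) hn⟩ : Fin n) ∧ p.1 ∈ I)}).Connected := by
  set o : Fin n := ⟨1, by omega⟩ with ho
  set z : Fin n := ⟨0, by omega⟩ with hz
  set M : Set (Fin n × Fin n) := {p | p.2 = o ∨ (p.2 = z ∧ p.1 ∈ I)} with hM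
  have hbase : ((z, o) : Fin n × Fin n) ∈ M := Or.inl rfl
  have key : ∀ m (h : m < n), ((gridGraph n).induce M).Reachable
      ⟨(⟨m, h⟩, o), Or.inl rfl⟩ ⟨(z, o), hbase⟩ := by
    intro m
    induction m with
    | zero => intro h; exact SimpleGraph.Reachable.refl _
    | succ m ih =>
      intro h
      have hm : m < n := by omega
      refine (SimpleGraph.Adj.reachable ?_).trans (ih hm)
      exact Or.inr ⟨rfl, Or.inr rfl⟩
  have reach : ∀ (i j : Fin n) (h : ((i, j) : Fin n × Fin n) ∈ M),
      ((gridGraph n).induce M).Reachable ⟨(i, j), h⟩ ⟨(z, o), hbase⟩ := by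
    intro i j h
    have h' := h
    rcases h' with h1 | ⟨h1, h2⟩
    · subst h1
      exact key i.val i.isLt
    · subst h1
      have hstep : ((gridGraph n).induce M).Adj ⟨(i, z), Or.inr ⟨rfl, h2⟩⟩
          ⟨(i, o), Or.inl rfl⟩ := Or.inl ⟨rfl, Or.inl rfl⟩
      exact hstep.reachable.trans (key i.val i.isLt)
  rw [SimpleGraph.connected_iff]
  refine ⟨?_, ⟨⟨(z, o), hbase⟩⟩⟩
  rintro ⟨⟨i, j⟩, hij⟩ ⟨⟨i', j'⟩, hij'⟩
  exact (reach i j hij).trans (reach i' j' hij').symm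

/-- **Correctness of the reduction from Set Cover to mask generation**: the set
cover instance `(U, S, k)` has a solution iff there is a nonempty mask `M`
(a set of vertices of the `n × n` grid graph inducing a connected subgraph)
that is accepted, i.e. such that the set `I_M` of column indices `i` with
`(i, 0) ∈ M` has at most `k` elements and `⋃ i ∈ I_M, S i = U`. -/
theorem setCover_iff_exists_accepted_mask
    {α : Type*} (n : ℕ) (hn : 2 ≤ n) (U : Finset α) (S : Fin n → Finset α)
    (hS : ∀ i, S i ⊆ U) (k : ℕ) :
    (∃ I : Finset (Fin n), I.card ≤ k ∧ (⋃ i ∈ I, (S i : Set α)) = (U : Set α)) ↔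
    (∃ M : Set (Fin n × Fin n), M.Nonempty ∧ ((gridGraph n).induce M).Connected ∧
      {i : Fin n | (i, (⟨0, by omega⟩ : Fin n)) ∈ M}.ncard ≤ k ∧
      (⋃ i ∈ {i : Fin n | (i, (⟨0, by omega⟩ : Fin n)) ∈ M}, (S i : Set α))
        = (U : Set α)) := by
  classical
  constructor
  · rintro ⟨I, hIk, hIU⟩
    set o : Fin n := ⟨1, by omega⟩ with ho
    set z : Fin n := ⟨0, by omega⟩ with hz
    set M : Set (Fin n × Fin n) := {p | p.2 = o ∨ (p.2 = z ∧ p.1 ∈ I)} with hM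
    have hzo : z ≠ o := by simp [hz, ho, Fin.ext_iff]
    have hset : {i : Fin n | ((i, (⟨0, by omega⟩ : Fin n)) : Fin n × Fin n) ∈ M}
        = (↑I : Set (Fin n)) := by
      ext i
      constructor
      · rintro (h | ⟨-, h⟩)
        · exact absurd h hzo
        · exact h
      · intro h
        exact Or.inr ⟨rfl, h⟩
    refine ⟨M, ⟨(z, o), Or.inl rfl⟩, grid_mask_connected n hn I, ?_, ?_⟩
    · rw [hset, Set.ncard_coe_finset]; exact hIk
    · rw [hset]; simpa using hIU
  · rintro ⟨M, -, -, hcard, hU⟩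
    have hfin : {i : Fin n | (i, (⟨0, by omega⟩ : Fin n)) ∈ M}.Finite :=
      Set.toFinite _
    refine ⟨hfin.toFinset, ?_, ?_⟩
    · rwa [← Set.ncard_eq_toFinset_card _ hfin]
    · rw [← hU]
      apply Set.iUnion_congr
      intro i
      simp [hfin.mem_toFinset]
end
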